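/- Let f∈𝒦⁻ and write f² for the function n↦f(n)². Then for every φ∈ℓ²_fin(ℕ) one has φ∈D(f(N)T_{f²})∩D(T_{f²}f(N))∩D(T_f) and (f(N)T_{f²} + T_{f²}f(N))φ = T_fφ. -/

import Mathlib

open Filter Topology
open scoped ENNReal

noncomputable section

abbrev l2 : Type := lp (fun _ : ℕ => ℂ) 2

def xi (n : ℕ) : l2 := lp.single 2 n 1

def FinSupp (φ : l2) : Prop := (Function.support (⇑φ : ℕ → ℂ)).Finite

/-- The class 𝒦. -/
def MemK (f : ℕ → ℝ) : Prop := 0 < f 0 ∧ ∀ n, f n < f (n + 1)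

/-- The class 𝒦⁻. -/
def MemKminus (f : ℕ → ℝ) : Prop := MemK f ∧ Summable (fun n => 1 / (f n) ^ 2)

def fsq (f : ℕ → ℝ) : ℕ → ℝ := fun n => (f n) ^ 2

/-- the sequence of the multiplication operator `f(N)` applied to φ -/
def mulSeq (f : ℕ → ℝ) (φ : ℕ → ℂ) : ℕ → ℂ := fun n => ((f n : ℝ) : ℂ) * φ n

/-- the sequence of `f(N)^p` applied to φ -/
def powSeq (f : ℕ → ℝ) (p : ℕ) (φ : ℕ → ℂ) : ℕ → ℂ := fun n => (((f n) ^ p : ℝ) : ℂ) * φ n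

/-- coordinates of `T_{f,m} φ`. -/
def TfmSeq (f : ℕ → ℝ) (m : ℕ) (φ : ℕ → ℂ) : ℕ → ℂ := fun n =>
  Complex.I * ∑ k ∈ Finset.Icc 1 m,
    ((if k ≤ n then φ (n - k) / ((f n - f (n - k) : ℝ) : ℂ) else 0)
      - φ (n + k) / ((f (n + k) - f n : ℝ) : ℂ))

/-- `(φ, ψ)` is in the graph of `T_f`. -/
def InGraphTf (f : ℕ → ℝ) (φ ψ : l2) : Prop :=
  ∃ h : ∀ m, Memℓp (TfmSeq f m (⇑φ)) 2,
    Tendsto (fun m => (⟨TfmSeq f m (⇑φ), h m⟩ : l2)) atTop (𝓝 ψ)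

/-!
For `φ` supported in a finite set `s`, the truncations `T_{g,m} φ` have coordinates
`i ∑_{|j - n| ≤ m} φ j / (g n - g j)`. They converge in `ℓ²` to the finite combination
`i ∑_{j ∈ s} φ j / (g n - g j)`: coordinatewise they are eventually equal to it, and all
differences are dominated by `∑_{j ∈ s} |φ j| / |g n - g j|`, which is square-summable since
`g n - g j ~ g n` and `∑ 1 / g n ^ 2 < ∞`. The identity `f(N) T_{f²} + T_{f²} f(N) = T_f` then holds
term by term, because `(f n + f j) / (f n ^ 2 - f j ^ 2) = 1 / (f n - f j)`; read backwards it also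
shows that `f(N) T_{f²} φ` lies in `ℓ²`.
-/

namespace lp

variable {α : Type*} {E : α → Type*} [∀ a, NormedAddCommGroup (E a)] {p : ℝ≥0∞} [Fact (1 ≤ p)]

theorem tendsto_of_dominated_convergence {ι : Type*} {l : Filter ι} (hp : 0 < p.toReal)
    {F : ι → lp E p} {f : lp E p} {b : α → ℝ} (hb : Memℓp b p)
    (hF : ∀ a, Tendsto (fun k => F k a) l (𝓝 (f a)))
    (hbound : ∀ᶠ k in l, ∀ a, ‖F k a - f a‖ ≤ b a) :
    Tendsto F l (𝓝 f) := by
  have hpow : Tendsto (fun k => ‖F k - f‖ ^ p.toReal) l (𝓝 0) := by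
    simp_rw [norm_rpow_eq_tsum hp, coeFn_sub, Pi.sub_apply]
    have hlim : ∀ a, Tendsto (fun k => ‖F k a - f a‖ ^ p.toReal) l (𝓝 0) := fun a => by
      simpa [Real.zero_rpow hp.ne'] using
        (((hF a).sub_const (f a)).norm.rpow_const (Or.inr hp.le))
    simpa using tendsto_tsum_of_dominated_convergence (hb.norm.summable hp) hlim <|
      hbound.mono fun k hk a => by
        rw [Real.norm_of_nonneg (by positivity), norm_norm]
        exact Real.rpow_le_rpow (norm_nonneg _) ((hk a).trans (Real.le_norm_self _)) hp.le
  rw [tendsto_iff_norm_sub_tendsto_zero]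
  simpa [Real.rpow_rpow_inv (norm_nonneg _) hp.ne', Real.zero_rpow (inv_ne_zero hp.ne')]
    using hpow.rpow_const (p := p.toReal⁻¹) (Or.inr (inv_nonneg.2 hp.le))

end lp

open Finset

theorem TfmSeq_eq_sum_Ico (g : ℕ → ℝ) (m : ℕ) (φ : ℕ → ℂ) (n : ℕ) :
    TfmSeq g m φ n = Complex.I * ∑ j ∈ Ico (n - m) (n + m + 1), φ j / ((g n - g j : ℝ) : ℂ) := by
  set a : ℕ → ℂ := fun j => φ j / ((g n - g j : ℝ) : ℂ) with ha
  have hback : ∑ k ∈ Icc 1 m, (if k ≤ n then φ (n - k) / ((g n - g (n - k) : ℝ) : ℂ) else 0)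
      = ∑ j ∈ Ico (n - m) n, a j := by
    rw [← sum_filter]
    refine sum_nbij' (n - ·) (n - ·) ?_ ?_ ?_ ?_ fun _ _ => rfl <;> intro k hk <;>
      simp only [mem_filter, mem_Icc, mem_Ico] at hk ⊢ <;> omega
  have hfwd : ∑ k ∈ Icc 1 m, φ (n + k) / ((g (n + k) - g n : ℝ) : ℂ)
      = -∑ j ∈ Ico (n + 1) (n + m + 1), a j := by
    rw [← sum_neg_distrib, ← Ico_add_one_right_eq_Icc, (by ring : n + 1 = 1 + n),
      (by ring : n + m + 1 = m + 1 + n), ← sum_Ico_add']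
    refine sum_congr rfl fun k _ => ?_
    rw [ha, add_comm k n, ← div_neg, ← Complex.ofReal_neg, neg_sub]
  rw [TfmSeq, sum_sub_distrib, hback, hfwd, sub_neg_eq_add,
    ← sum_Ico_consecutive _ (Nat.sub_le n m) (by omega : n ≤ n + m + 1),
    sum_eq_sum_Ico_succ_bot (by omega : n < n + m + 1)]
  simp [ha]

/-- Coordinates of `T_g φ` for `φ` supported in `s`; the diagonal term `j = n` vanishes
because `x / 0 = 0`, as in `TfmSeq`. -/
def TfSeq (g : ℕ → ℝ) (s : Finset ℕ) (φ : ℕ → ℂ) : ℕ → ℂ := fun n =>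
  Complex.I * ∑ j ∈ s, φ j / ((g n - g j : ℝ) : ℂ)

section TfSeq

open Asymptotics

variable {g : ℕ → ℝ} {s : Finset ℕ} {φ : ℕ → ℂ}

theorem TfSeq_sub_TfmSeq (hφ : ∀ j ∉ s, φ j = 0) (m n : ℕ) :
    TfSeq g s φ n - TfmSeq g m φ n =
      Complex.I * ∑ j ∈ s with j ∉ Ico (n - m) (n + m + 1), φ j / ((g n - g j : ℝ) : ℂ) := by
  have hIco : ∑ j ∈ Ico (n - m) (n + m + 1), φ j / ((g n - g j : ℝ) : ℂ)
      = ∑ j ∈ s with j ∈ Ico (n - m) (n + m + 1), φ j / ((g n - g j : ℝ) : ℂ) := by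
    refine (sum_subset (fun j hj => (mem_filter.1 hj).2) fun j hj hjs => ?_).symm
    rw [hφ j fun hs => hjs (mem_filter.2 ⟨hs, hj⟩), zero_div]
  rw [TfmSeq_eq_sum_Ico, TfSeq, hIco,
    ← sum_filter_add_sum_filter_not s (· ∈ Ico (n - m) (n + m + 1))]
  ring

theorem norm_TfSeq_sub_TfmSeq_le (hφ : ∀ j ∉ s, φ j = 0) (m n : ℕ) :
    ‖TfSeq g s φ n - TfmSeq g m φ n‖ ≤ ∑ j ∈ s, ‖φ j / ((g n - g j : ℝ) : ℂ)‖ := by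
  rw [TfSeq_sub_TfmSeq hφ, norm_mul, Complex.norm_I, one_mul]
  exact (norm_sum_le _ _).trans
    (sum_le_sum_of_subset_of_nonneg (filter_subset _ _) fun _ _ _ => norm_nonneg _)

theorem tendsto_TfmSeq (hφ : ∀ j ∉ s, φ j = 0) (n : ℕ) :
    Tendsto (fun m => TfmSeq g m φ n) atTop (𝓝 (TfSeq g s φ n)) := by
  refine tendsto_const_nhds.congr' ?_
  filter_upwards [eventually_ge_atTop n,
    (eventually_all_finset s).2 fun j _ => eventually_ge_atTop j] with m hnm hsm
  have hempty : {j ∈ s | j ∉ Ico (n - m) (n + m + 1)} = ∅ :=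
    filter_false_of_mem fun j hj => by simp only [mem_Ico, not_not]; have := hsm j hj; omega
  rw [← sub_eq_zero, TfSeq_sub_TfmSeq hφ, hempty, sum_empty, mul_zero]

variable (hg : Tendsto g atTop atTop) (hsum : Summable fun n => 1 / g n ^ 2)
include hg hsum

theorem summable_one_div_sub_sq (a : ℝ) :
    Summable fun n => 1 / (g n - a) ^ 2 := by
  have hequiv : (g · + -a) ~[atTop] g :=
    IsEquivalent.refl.add_const_of_norm_tendsto_atTop (tendsto_norm_atTop_atTop.comp hg)
  refine summable_of_isBigO_nat' hsum ?_
  simpa [one_div, Pi.inv_def, Pi.pow_def, ← sub_eq_add_neg] using ((hequiv.pow 2).inv).isBigO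

theorem memℓp_div_sub (c : ℂ) (a : ℝ) :
    Memℓp (fun n => c / ((g n - a : ℝ) : ℂ)) 2 := by
  refine memℓp_gen <| ((summable_one_div_sub_sq hg hsum a).mul_left (‖c‖ ^ 2)).congr fun n => ?_
  rw [ENNReal.toReal_ofNat, Real.rpow_two, norm_div, Complex.norm_real, Real.norm_eq_abs, div_pow,
    sq_abs]
  ring

theorem memℓp_TfSeq : Memℓp (TfSeq g s φ) 2 :=
  (Memℓp.finsetSum s fun j _ => memℓp_div_sub hg hsum (φ j) (g j)).const_mul Complex.I

theorem memℓp_sum_norm_div_sub :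
    Memℓp (fun n => ∑ j ∈ s, ‖φ j / ((g n - g j : ℝ) : ℂ)‖) 2 :=
  Memℓp.finsetSum s fun j _ => (memℓp_div_sub hg hsum (φ j) (g j)).norm

theorem memℓp_TfmSeq (hφ : ∀ j ∉ s, φ j = 0) (m : ℕ) : Memℓp (TfmSeq g m φ) 2 := by
  have hdiff : Memℓp (TfSeq g s φ - TfmSeq g m φ) 2 :=
    (memℓp_sum_norm_div_sub hg hsum).mono (norm_TfSeq_sub_TfmSeq_le hφ m)
  simpa only [sub_sub_cancel] using (memℓp_TfSeq (s := s) (φ := φ) hg hsum).sub hdiff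

theorem inGraphTf_TfSeq {φ : l2} (hφ : ∀ j ∉ s, φ j = 0) :
    InGraphTf g φ ⟨TfSeq g s φ, memℓp_TfSeq hg hsum⟩ :=
  ⟨memℓp_TfmSeq hg hsum hφ,
    lp.tendsto_of_dominated_convergence (by norm_num) (memℓp_sum_norm_div_sub hg hsum)
      (tendsto_TfmSeq hφ) (Eventually.of_forall fun m n => by
        rw [norm_sub_rev]; exact norm_TfSeq_sub_TfmSeq_le hφ m n)⟩

end TfSeq

theorem MemK.pos {f : ℕ → ℝ} (hf : MemK f) (n : ℕ) : 0 < f n :=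
  hf.1.trans_le <| (strictMono_nat_of_lt_succ hf.2).monotone n.zero_le

theorem MemKminus.tendsto_atTop {f : ℕ → ℝ} (hf : MemKminus f) : Tendsto f atTop atTop := by
  have hinv : Tendsto (fun n => (f n ^ 2)⁻¹) atTop (𝓝[>] 0) :=
    tendsto_nhdsWithin_iff.2 ⟨by simpa only [one_div] using hf.2.tendsto_atTop_zero,
      Eventually.of_forall fun n => Set.mem_Ioi.2 (by have := hf.1.pos n; positivity)⟩
  have hsq : Tendsto (fun n => f n ^ 2) atTop atTop := by
    simpa [Pi.inv_def] using hinv.inv_tendsto_nhdsGT_zero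
  refine Filter.tendsto_atTop.2 fun b => (Filter.tendsto_atTop.1 hsq (b ^ 2)).mono fun n hn => ?_
  nlinarith [hf.1.pos n]

open Asymptotics in
theorem summable_one_div_fsq_sq {f : ℕ → ℝ} (hsum : Summable fun n => 1 / f n ^ 2) :
    Summable fun n => 1 / fsq f n ^ 2 := by
  have hbdd : (fun n => 1 / f n ^ 2) =O[atTop] (fun _ => (1 : ℝ)) :=
    hsum.tendsto_atTop_zero.isBigO_one ℝ
  refine summable_of_isBigO_nat' hsum <|
    (hbdd.mul (isBigO_refl (fun n => 1 / f n ^ 2) atTop)).congr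
      (fun n => by simp only [fsq]; ring) fun n => one_mul _

theorem add_mul_div_sq_sub_sq {K : Type*} [Field K] {a b : K} (hab : a + b ≠ 0) (c : K) :
    (a + b) * c / (a ^ 2 - b ^ 2) = c / (a - b) := by
  rw [sq_sub_sq, mul_div_mul_left _ _ hab]

theorem mulSeq_TfSeq_fsq_add {f : ℕ → ℝ} (hpos : ∀ n, 0 < f n) (s : Finset ℕ) (φ : ℕ → ℂ)
    (n : ℕ) :
    mulSeq f (TfSeq (fsq f) s φ) n + TfSeq (fsq f) s (mulSeq f φ) n = TfSeq f s φ n := by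
  simp only [mulSeq, TfSeq, fsq, mul_sum, ← sum_add_distrib]
  refine sum_congr rfl fun j _ => ?_
  have hne : (f n : ℂ) + f j ≠ 0 := by exact_mod_cast (add_pos (hpos n) (hpos j)).ne'
  push_cast
  rw [← add_mul_div_sq_sub_sq hne]
  ring

/-- Let `f ∈ 𝒦⁻` and `f²(n) = f n ^ 2`. Then every finitely supported `φ`
lies in `D(f(N) T_{f²}) ∩ D(T_{f²} f(N)) ∩ D(T_f)` and
`(f(N) T_{f²} + T_{f²} f(N)) φ = T_f φ`. -/
theorem stmt7 (f : ℕ → ℝ) (hf : MemKminus f) (φ : l2) (hφ : FinSupp φ) :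
    ∃ (T2φ T2Fφ Tφ : l2) (hF : Memℓp (mulSeq f ⇑φ) 2) (hFT : Memℓp (mulSeq f ⇑T2φ) 2),
      InGraphTf (fsq f) φ T2φ ∧
      InGraphTf (fsq f) (⟨mulSeq f ⇑φ, hF⟩ : l2) T2Fφ ∧
      InGraphTf f φ Tφ ∧
      (⟨mulSeq f ⇑T2φ, hFT⟩ : l2) + T2Fφ = Tφ := by
  have hf_top := hf.tendsto_atTop
  have hf2_top : Tendsto (fsq f) atTop atTop := (tendsto_pow_atTop two_ne_zero).comp hf_top
  have hf2_sum := summable_one_div_fsq_sq hf.2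
  set s := hφ.toFinset
  have hs : ∀ j ∉ s, φ j = 0 := fun j hj => not_not.1 fun h => hj (hφ.mem_toFinset.2 h)
  have hsF : ∀ j ∉ s, mulSeq f φ j = 0 := fun j hj => by simp [mulSeq, hs j hj]
  have hF : Memℓp (mulSeq f φ) 2 :=
    (memℓp_zero (s.finite_toSet.subset fun j hj => by_contra fun hjs => hj (hsF j hjs))
      ).of_exponent_ge zero_le
  let T2φ : l2 := ⟨TfSeq (fsq f) s φ, memℓp_TfSeq hf2_top hf2_sum⟩
  let T2Fφ : l2 := ⟨TfSeq (fsq f) s (mulSeq f φ), memℓp_TfSeq hf2_top hf2_sum⟩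
  let Tφ : l2 := ⟨TfSeq f s φ, memℓp_TfSeq hf_top hf.2⟩
  have hid : mulSeq f T2φ = Tφ - T2Fφ :=
    funext fun n => eq_sub_of_add_eq (mulSeq_TfSeq_fsq_add hf.1.pos s φ n)
  have hFT : Memℓp (mulSeq f T2φ) 2 := hid ▸ (lp.memℓp Tφ).sub (lp.memℓp T2Fφ)
  refine ⟨T2φ, T2Fφ, Tφ, hF, hFT, inGraphTf_TfSeq hf2_top hf2_sum hs,
    inGraphTf_TfSeq hf2_top hf2_sum hsF, inGraphTf_TfSeq hf_top hf.2 hs, lp.ext ?_⟩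
  rw [lp.coeFn_add]
  exact (congrArg (· + ⇑T2Fφ) hid).trans (sub_add_cancel _ _)
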